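/- arXiv:1301.2021 — 6 statements merged into one kernel-verified Lean document; each statement's English description precedes it below -/
import Mathlib

section
/- Under the same setup, the variance σ² of X satisfies n/2 ≤ σ² ≤ n². -/
open Polynomial Finset

/-!
Substituting `z = 1 + t` turns each factor of the generating function into
`1 + t + t² / (2 (1 - cos φⱼ))`. Since `∑ wₖ (1 + t)ᵏ = ∑ₘ E[C(X, m)] tᵐ`, comparing the
coefficients of `1`, `t`, `t²` gives `E[1] = 1`, `E[X] = n` and `E[C(X, 2)] = σ²/2 + C(n, 2)`,
so `σ²` is the variance of `X`. As `X` lives on `{0, …, 2n}` and has mean `n`, `(X - n)² ≤ n²`.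
The lower bound holds termwise because `1 - cos φ ≤ 2`.
-/

lemma one_sub_cos_pos_of_mem_Ioo {x : ℝ} (hx : x ∈ Set.Ioo 0 (2 * Real.pi)) :
    0 < 1 - Real.cos x := by
  have hne : Real.cos x ≠ 1 := fun h =>
    hx.1.ne' ((Real.cos_eq_one_iff_of_lt_of_lt (by linarith [Real.pi_pos, hx.1]) hx.2).mp h)
  exact sub_pos.2 ((Real.cos_le_one x).lt_of_ne hne)

lemma half_le_one_div_one_sub_cos {x : ℝ} (hx : 0 < 1 - Real.cos x) :
    1 / 2 ≤ 1 / (1 - Real.cos x) :=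
  one_div_le_one_div_of_le hx (by linarith [Real.neg_one_le_cos x])

lemma one_sub_two_mul_mul_add_sq_div_eq {c : ℝ} (hc : 1 - c ≠ 0) (t : ℝ) :
    (1 - 2 * (1 + t) * c + (1 + t) ^ 2) / (2 * (1 - c)) = 1 + t + (2 * (1 - c))⁻¹ * t ^ 2 := by
  field_simp
  ring

lemma coeff_prod_one_add_X_add_C_mul_X_sq {R ι : Type*} [CommRing R] [DecidableEq ι]
    (s : Finset ι) (a : ι → R) :
    (∏ i ∈ s, (1 + X + C (a i) * X ^ 2)).coeff 0 = 1 ∧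
    (∏ i ∈ s, (1 + X + C (a i) * X ^ 2)).coeff 1 = (#s : R) ∧
    (∏ i ∈ s, (1 + X + C (a i) * X ^ 2)).coeff 2 = ∑ i ∈ s, a i + (((#s).choose 2 : ℕ) : R) := by
  induction s using Finset.induction_on with
  | empty => simp [coeff_one]
  | @insert i s hi ih =>
    obtain ⟨h0, h1, h2⟩ := ih
    rw [prod_insert hi, card_insert_of_notMem hi, sum_insert hi, Nat.choose_succ_succ',
      Nat.choose_one_right]
    simp only [add_mul, one_mul, mul_assoc, coeff_add, h0, mul_coeff_zero, coeff_X, one_ne_zero,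
      ↓reduceIte, mul_one, add_zero, coeff_C_zero, coeff_X_pow, OfNat.zero_ne_ofNat, mul_zero, h1,
      coeff_X_mul, coeff_C_mul, coeff_X_pow_mul', Nat.not_ofNat_le_one, Nat.cast_add, Nat.cast_one,
      h2, Std.le_refl, tsub_self, Nat.reduceAdd, true_and]
    ring

lemma sum_mul_choose_eq_coeff {R : Type*} [CommRing R] [IsDomain R] [Infinite R]
    {w : ℕ → R} {N : ℕ} {Q : R[X]}
    (h : ∀ t, ∑ k ∈ range N, w k * (1 + t) ^ k = Q.eval t) (m : ℕ) :
    ∑ k ∈ range N, w k * (k.choose m : R) = Q.coeff m := by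
  have hQ : ∑ k ∈ range N, C (w k) * (1 + X) ^ k = Q :=
    Polynomial.funext fun t => by simpa [eval_finsetSum] using h t
  simp [← hQ, coeff_one_add_X_pow]

lemma sum_eq_one_and_sum_mul_sub_sq_eq_of_shifted_pgf {ι : Type*} [DecidableEq ι]
    (s : Finset ι) (a : ι → ℝ) {w : ℕ → ℝ} {N : ℕ}
    (h : ∀ t, ∑ k ∈ range N, w k * (1 + t) ^ k = ∏ i ∈ s, (1 + t + a i * t ^ 2)) :
    ∑ k ∈ range N, w k = 1 ∧
      ∑ k ∈ range N, w k * ((k : ℝ) - #s) ^ 2 = 2 * ∑ i ∈ s, a i := by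
  have hQ : ∀ t, ∑ k ∈ range N, w k * (1 + t) ^ k =
      (∏ i ∈ s, (1 + X + C (a i) * X ^ 2)).eval t := fun t => by simp [h, eval_prod]
  obtain ⟨c0, c1, c2⟩ := coeff_prod_one_add_X_add_C_mul_X_sq s a
  have m0 := sum_mul_choose_eq_coeff hQ 0
  have m1 := sum_mul_choose_eq_coeff hQ 1
  have m2 := sum_mul_choose_eq_coeff hQ 2
  simp only [Nat.choose_zero_right, Nat.choose_one_right, Nat.cast_choose_two, Nat.cast_one,
    mul_one] at m0 m1 m2
  rw [c0] at m0
  rw [c1] at m1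
  rw [c2, Nat.cast_choose_two] at m2
  refine ⟨m0, ?_⟩
  calc ∑ k ∈ range N, w k * ((k : ℝ) - #s) ^ 2
      = 2 * ∑ k ∈ range N, w k * ((k : ℝ) * (k - 1) / 2)
        + (1 - 2 * #s) * ∑ k ∈ range N, w k * k + (#s : ℝ) ^ 2 * ∑ k ∈ range N, w k := by
        simp only [mul_sum, ← sum_add_distrib]
        exact sum_congr rfl fun k _ => by ring
    _ = 2 * ∑ i ∈ s, a i := by rw [m0, m1, m2]; ring

lemma sum_mul_sub_sq_le {w : ℕ → ℝ} {n : ℕ} (hw : ∀ k, 0 ≤ w k)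
    (hmass : ∑ k ∈ range (2 * n + 1), w k = 1) :
    ∑ k ∈ range (2 * n + 1), w k * ((k : ℝ) - n) ^ 2 ≤ (n : ℝ) ^ 2 :=
  calc ∑ k ∈ range (2 * n + 1), w k * ((k : ℝ) - n) ^ 2
      ≤ ∑ k ∈ range (2 * n + 1), w k * (n : ℝ) ^ 2 := by
        refine sum_le_sum fun k hk => mul_le_mul_of_nonneg_left ?_ (hw k)
        have hk : (k : ℝ) ≤ 2 * n := by exact_mod_cast Nat.lt_succ_iff.mp (mem_range.mp hk)
        nlinarith [(k.cast_nonneg : (0 : ℝ) ≤ k)]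
    _ = (n : ℝ) ^ 2 := by rw [← sum_mul, hmass, one_mul]

theorem stmt4_general (n : ℕ) (φ : Fin n → ℝ) (hφ : ∀ j, φ j ∈ Set.Ioo 0 (2 * Real.pi))
    (w : ℕ → ℝ) (hw : ∀ k, 0 ≤ w k)
    (hpgf : ∀ z : ℝ,
      ∑ k ∈ Finset.range (2 * n + 1), w k * z ^ k =
        ∏ j : Fin n, (1 - 2 * z * Real.cos (φ j) + z ^ 2) / (2 * (1 - Real.cos (φ j)))) :
    (n : ℝ) / 2 ≤ ∑ j : Fin n, 1 / (1 - Real.cos (φ j)) ∧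
      ∑ j : Fin n, 1 / (1 - Real.cos (φ j)) ≤ (n : ℝ) ^ 2 := by
  have hpos j : 0 < 1 - Real.cos (φ j) := one_sub_cos_pos_of_mem_Ioo (hφ j)
  have hshift t : ∑ k ∈ range (2 * n + 1), w k * (1 + t) ^ k =
      ∏ j, (1 + t + (2 * (1 - Real.cos (φ j)))⁻¹ * t ^ 2) := by
    rw [hpgf]
    exact prod_congr rfl fun j _ => one_sub_two_mul_mul_add_sq_div_eq (hpos j).ne' t
  obtain ⟨hmass, hvar⟩ := sum_eq_one_and_sum_mul_sub_sq_eq_of_shifted_pgf univ _ hshift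
  refine ⟨?_, ?_⟩
  · calc (n : ℝ) / 2 = ∑ _j : Fin n, (1 : ℝ) / 2 := by simp [div_eq_mul_inv]
      _ ≤ ∑ j, 1 / (1 - Real.cos (φ j)) :=
        sum_le_sum fun j _ => half_le_one_div_one_sub_cos (hpos j)
  · have hσ : ∑ j, 1 / (1 - Real.cos (φ j)) = 2 * ∑ j, (2 * (1 - Real.cos (φ j)))⁻¹ := by
      rw [mul_sum]
      refine sum_congr rfl fun j _ => ?_
      rw [mul_inv, ← mul_assoc, mul_inv_cancel₀ two_ne_zero, one_mul, one_div]
    rw [hσ, ← hvar, card_univ, Fintype.card_fin]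
    exact sum_mul_sub_sq_le hw hmass

theorem stmt4 (n : ℕ) (φ : Fin n → ℝ) (hφ : ∀ j, φ j ∈ Set.Ioo 0 (2 * Real.pi))
    (w : ℕ → ℝ) (hw : ∀ k, 0 ≤ w k)
    (hsupp : ∀ k, 2 * n < k → w k = 0)
    (hpgf : ∀ z : ℝ,
      ∑ k ∈ Finset.range (2 * n + 1), w k * z ^ k =
        ∏ j : Fin n, (1 - 2 * z * Real.cos (φ j) + z ^ 2) / (2 * (1 - Real.cos (φ j)))) :
    (n : ℝ) / 2 ≤ ∑ j : Fin n, 1 / (1 - Real.cos (φ j)) ∧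
      ∑ j : Fin n, 1 / (1 - Real.cos (φ j)) ≤ (n : ℝ) ^ 2 :=
  stmt4_general n φ hφ w hw hpgf
end

section
/- Under the root-unitary setup with σ² = ∑ 1/(1 - cos φ_j) and ω = σ^{-4} ∑ 1/(1 - cos φ_j)², the fourth normalized central moment satisfies E((X - n)/σ)⁴ = 3 + σ^{-2} - 3ω. -/
/-!
The operator `P ↦ X P' - c P` multiplies `X ^ k` by `k - c`, so evaluating its `m`-th iterate
at `1` gives the `m`-th moment about `c` of the coefficients of `P`. It satisfies a Leibniz rule,
hence moments of a product are binomial convolutions of the moments of the factors. Each factor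
`(1 - 2 z cos φ + z²) / (2 (1 - cos φ)) = (μ/2) z² + (1 - μ) z + μ/2`, with `μ = 1 / (1 - cos φ)`,
has moments `1, 0, μ, 0, μ` about `1`, and for factors with moments `1, 0` the fourth moment of
the product is `∑ m₄ + 3 (∑ m₂)² - 3 ∑ m₂²`; here this is `σ² + 3 σ⁴ - 3 ω σ⁴`.
-/

open Polynomial Finset

section CoeffMoment

variable {R : Type*} [CommRing R]

noncomputable def eulerOp (c : R) : R[X] →ₗ[R] R[X] :=
  LinearMap.mulLeft R X ∘ₗ derivative - c • LinearMap.id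

lemma eulerOp_apply (c : R) (P : R[X]) : eulerOp c P = X * derivative P - C c * P := by
  simp [eulerOp, C_mul']

lemma eulerOp_mul (c d : R) (P Q : R[X]) :
    eulerOp (c + d) (P * Q) = eulerOp c P * Q + P * eulerOp d Q := by
  simp only [eulerOp_apply, derivative_mul, C_add]; ring

lemma eulerOp_C_mul_X_pow (c a : R) (k : ℕ) :
    eulerOp c (C a * X ^ k) = C (a * (k - c)) * X ^ k := by
  rcases k with _ | k
  · simp [eulerOp_apply, mul_comm]
  · simp only [eulerOp_apply, derivative_C_mul_X_pow, C_mul, C_sub, C_eq_natCast]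
    push_cast
    ring

/-- `coeffMoment m c P = ∑ k, P.coeff k * (k - c) ^ m` (see `coeffMoment_C_mul_X_pow`). -/
noncomputable def coeffMoment (m : ℕ) (c : R) : R[X] →ₗ[R] R :=
  leval 1 ∘ₗ eulerOp c ^ m

lemma coeffMoment_zero (c : R) (P : R[X]) : coeffMoment 0 c P = P.eval 1 := by
  simp [coeffMoment]

lemma coeffMoment_succ (m : ℕ) (c : R) (P : R[X]) :
    coeffMoment (m + 1) c P = coeffMoment m c (eulerOp c P) := by
  simp [coeffMoment, pow_succ]

lemma coeffMoment_C_mul_X_pow (m : ℕ) (c a : R) (k : ℕ) :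
    coeffMoment m c (C a * X ^ k) = a * (k - c) ^ m := by
  induction m generalizing a with
  | zero => simp [coeffMoment_zero]
  | succ m ih => rw [coeffMoment_succ, eulerOp_C_mul_X_pow, ih]; ring

lemma coeffMoment_mul (m : ℕ) (c d : R) (P Q : R[X]) :
    coeffMoment m (c + d) (P * Q) =
      ∑ i ∈ range (m + 1), m.choose i * coeffMoment i c P * coeffMoment (m - i) d Q := by
  induction m generalizing P Q with
  | zero => simp [coeffMoment_zero]
  | succ m ih =>
    rw [coeffMoment_succ, eulerOp_mul, map_add, ih, ih]
    simp_rw [mul_assoc]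
    rw [sum_choose_succ_mul (fun i j => coeffMoment i c P * coeffMoment j d Q), add_comm]
    simp_rw [← coeffMoment_succ]
    congr 1
    refine sum_congr rfl fun i hi => ?_
    rw [Nat.sub_add_comm (mem_range_succ_iff.mp hi)]

lemma coeffMoment_mul_of_centered {c d : R} {P Q : R[X]}
    (hP₀ : coeffMoment 0 c P = 1) (hP₁ : coeffMoment 1 c P = 0)
    (hQ₀ : coeffMoment 0 d Q = 1) (hQ₁ : coeffMoment 1 d Q = 0) :
    coeffMoment 0 (c + d) (P * Q) = 1 ∧ coeffMoment 1 (c + d) (P * Q) = 0 ∧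
      coeffMoment 2 (c + d) (P * Q) = coeffMoment 2 c P + coeffMoment 2 d Q ∧
      coeffMoment 4 (c + d) (P * Q) =
        coeffMoment 4 c P + 6 * coeffMoment 2 c P * coeffMoment 2 d Q + coeffMoment 4 d Q := by
  simp only [coeffMoment_mul, sum_range_succ, sum_range_zero, hP₀, hP₁, hQ₀, hQ₁]
  norm_num [Nat.choose]
  constructor <;> ring

lemma coeffMoment_four_prod {ι : Type*} [DecidableEq ι] (s : Finset ι) (f : ι → R[X])
    (c v q : ι → R) (h₀ : ∀ i ∈ s, coeffMoment 0 (c i) (f i) = 1)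
    (h₁ : ∀ i ∈ s, coeffMoment 1 (c i) (f i) = 0) (h₂ : ∀ i ∈ s, coeffMoment 2 (c i) (f i) = v i)
    (h₄ : ∀ i ∈ s, coeffMoment 4 (c i) (f i) = q i) :
    coeffMoment 4 (∑ i ∈ s, c i) (∏ i ∈ s, f i) =
      ∑ i ∈ s, q i + 3 * (∑ i ∈ s, v i) ^ 2 - 3 * ∑ i ∈ s, v i ^ 2 := by
  suffices coeffMoment 0 (∑ i ∈ s, c i) (∏ i ∈ s, f i) = 1 ∧
      coeffMoment 1 (∑ i ∈ s, c i) (∏ i ∈ s, f i) = 0 ∧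
      coeffMoment 2 (∑ i ∈ s, c i) (∏ i ∈ s, f i) = ∑ i ∈ s, v i ∧
      coeffMoment 4 (∑ i ∈ s, c i) (∏ i ∈ s, f i) =
        ∑ i ∈ s, q i + 3 * (∑ i ∈ s, v i) ^ 2 - 3 * ∑ i ∈ s, v i ^ 2 from this.2.2.2
  induction s using Finset.induction_on with
  | empty => simp [coeffMoment_zero, coeffMoment_succ, eulerOp_apply]
  | insert a s ha ih =>
    obtain ⟨i₀, i₁, i₂, i₄⟩ := ih (fun i hi => h₀ i (mem_insert_of_mem hi))
      (fun i hi => h₁ i (mem_insert_of_mem hi)) (fun i hi => h₂ i (mem_insert_of_mem hi))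
      (fun i hi => h₄ i (mem_insert_of_mem hi))
    obtain ⟨m₀, m₁, m₂, m₄⟩ := coeffMoment_mul_of_centered (h₀ a (mem_insert_self a s))
      (h₁ a (mem_insert_self a s)) i₀ i₁
    simp only [sum_insert ha, prod_insert ha]
    refine ⟨m₀, m₁, ?_, ?_⟩
    · rw [m₂, i₂, h₂ a (mem_insert_self a s)]
    · rw [m₄, i₂, i₄, h₂ a (mem_insert_self a s), h₄ a (mem_insert_self a s)]
      ring

lemma coeffMoment_symmQuadratic (m : ℕ) (a b : R) :
    coeffMoment m 1 (C a * X ^ 2 + C b * X + C a) = a + b * 0 ^ m + a * (-1) ^ m := by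
  have h := coeffMoment_C_mul_X_pow m (1 : R)
  rw [map_add, map_add, h, ← pow_one X, h, ← mul_one (C a), ← pow_zero X, h]
  norm_num

end CoeffMoment

theorem stmt6_general (n : ℕ) (hn : 0 < n)
    (φ : Fin n → ℝ) (hφ : ∀ j, φ j ∈ Set.Ioo 0 (2 * Real.pi))
    (w : ℕ → ℝ)
    (hpgf : ∀ z : ℝ,
      ∑ k ∈ Finset.range (2 * n + 1), w k * z ^ k =
        ∏ j : Fin n, (1 - 2 * z * Real.cos (φ j) + z ^ 2) / (2 * (1 - Real.cos (φ j)))) :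
    (∑ k ∈ Finset.range (2 * n + 1),
        w k * (((k : ℝ) - n) / Real.sqrt (∑ j : Fin n, 1 / (1 - Real.cos (φ j)))) ^ 4) =
      3 + 1 / (∑ j : Fin n, 1 / (1 - Real.cos (φ j)))
        - 3 * ((∑ j : Fin n, 1 / (1 - Real.cos (φ j)) ^ 2)
            / (∑ j : Fin n, 1 / (1 - Real.cos (φ j))) ^ 2) := by
  set μ : Fin n → ℝ := fun j => 1 / (1 - Real.cos (φ j)) with hμ
  have hfactor : ∑ k ∈ range (2 * n + 1), C (w k) * X ^ k =
      ∏ j, (C (μ j / 2) * X ^ 2 + C (1 - μ j) * X + C (μ j / 2)) := by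
    refine Polynomial.funext fun z => ?_
    simp only [eval_finsetSum, eval_prod, eval_add, eval_mul, eval_pow, eval_C, eval_X, hpgf z]
    refine prod_congr rfl fun j _ => ?_
    have := (one_sub_cos_pos_of_mem_Ioo (hφ j)).ne'
    simp only [hμ]
    field_simp
    ring
  have hmoment : ∑ k ∈ range (2 * n + 1), w k * ((k : ℝ) - n) ^ 4 =
      ∑ j, μ j + 3 * (∑ j, μ j) ^ 2 - 3 * ∑ j, μ j ^ 2 := by
    have h := congrArg (coeffMoment 4 (∑ _j : Fin n, (1 : ℝ))) hfactor
    rw [map_sum, coeffMoment_four_prod _ _ _ μ μ] at h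
    · simpa [coeffMoment_C_mul_X_pow] using h
    all_goals intro j _; rw [coeffMoment_symmQuadratic]; ring
  have hS : 0 < ∑ j, μ j :=
    sum_pos (fun j _ => one_div_pos.mpr (one_sub_cos_pos_of_mem_Ioo (hφ j)))
      (univ_nonempty_iff.mpr ⟨⟨0, hn⟩⟩)
  have hsqrt : √(∑ j, μ j) ^ 4 = (∑ j, μ j) ^ 2 := by
    rw [show 4 = 2 * 2 from rfl, pow_mul, Real.sq_sqrt hS.le]
  simp_rw [← one_div_pow]
  calc ∑ k ∈ range (2 * n + 1), w k * (((k : ℝ) - n) / √(∑ j, μ j)) ^ 4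
      = (∑ k ∈ range (2 * n + 1), w k * ((k : ℝ) - n) ^ 4) / (∑ j, μ j) ^ 2 := by
        rw [sum_div]
        exact sum_congr rfl fun k _ => by rw [div_pow, hsqrt, mul_div_assoc]
    _ = 3 + 1 / ∑ j, μ j - 3 * ((∑ j, μ j ^ 2) / (∑ j, μ j) ^ 2) := by
        rw [hmoment]
        field_simp
        ring

theorem stmt6 (n : ℕ) (hn : 0 < n)
    (φ : Fin n → ℝ) (hφ : ∀ j, φ j ∈ Set.Ioo 0 (2 * Real.pi))
    (w : ℕ → ℝ) (hw : ∀ k, 0 ≤ w k)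
    (hsupp : ∀ k, 2 * n < k → w k = 0)
    (hpgf : ∀ z : ℝ,
      ∑ k ∈ Finset.range (2 * n + 1), w k * z ^ k =
        ∏ j : Fin n, (1 - 2 * z * Real.cos (φ j) + z ^ 2) / (2 * (1 - Real.cos (φ j)))) :
    (∑ k ∈ Finset.range (2 * n + 1),
        w k * (((k : ℝ) - n) / Real.sqrt (∑ j : Fin n, 1 / (1 - Real.cos (φ j)))) ^ 4) =
      3 + 1 / (∑ j : Fin n, 1 / (1 - Real.cos (φ j)))
        - 3 * ((∑ j : Fin n, 1 / (1 - Real.cos (φ j)) ^ 2)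
            / (∑ j : Fin n, 1 / (1 - Real.cos (φ j))) ^ 2) :=
  stmt6_general n hn φ hφ w hpgf
end

section
/- Under the root-unitary setup, the fourth normalized central moment satisfies 1 ≤ E((X - n)/σ)⁴ ≤ 3 - 1/(2σ²) < 3. -/
/-!
With `v j = 1 / (1 - cos φ j)`, each factor of the generating function equals
`z + v j (z - 1)² / 2`: read through its coefficients it is a signed distribution of mass 1
centred at 1, with vanishing odd central moments and second and fourth central moments both
equal to `v j`. Central moments of a product of polynomials are binomial convolutions of those
of the factors, so `E (X - n)² = σ² = ∑ v j` and the fourth cumulant is additive: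
`E (X - n)⁴ = σ² + 3 σ⁴ - 3 ∑ v j²`. Jensen gives `E (X - n)⁴ ≥ σ⁴`, and `v j ≥ 1 / 2` gives
`∑ v j² ≥ σ² / 2`, which is the upper bound.
-/

open Polynomial Finset

namespace Polynomial

/-- `p ↦ ∑ k, p.coeff k * (k - c) ^ m`: the `m`-th moment about `c` of the signed distribution
whose generating function is `p`. -/
noncomputable def momentAbout (c : ℝ) (m : ℕ) : ℝ[X] →ₗ[ℝ] ℝ :=
  lsum fun k => ((k : ℝ) - c) ^ m • LinearMap.id

theorem momentAbout_monomial (c : ℝ) (m k : ℕ) (a : ℝ) :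
    momentAbout c m (monomial k a) = a * ((k : ℝ) - c) ^ m := by
  simp [momentAbout, sum_monomial_index, mul_comm]

theorem momentAbout_sum_C_mul_X_pow (c : ℝ) (m : ℕ) (s : Finset ℕ) (a : ℕ → ℝ) :
    momentAbout c m (∑ k ∈ s, C (a k) * X ^ k) = ∑ k ∈ s, a k * ((k : ℝ) - c) ^ m := by
  simp only [map_sum, C_mul_X_pow_eq_monomial, momentAbout_monomial]

theorem momentAbout_mul (c d : ℝ) (m : ℕ) (p q : ℝ[X]) :
    momentAbout (c + d) m (p * q) =
      ∑ i ∈ range (m + 1), m.choose i * momentAbout c i p * momentAbout d (m - i) q := by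
  induction p using Polynomial.induction_on' with
  | add p₁ p₂ h₁ h₂ => simp only [add_mul, map_add, h₁, h₂, mul_add, ← sum_add_distrib]
  | monomial i a =>
    induction q using Polynomial.induction_on' with
    | add q₁ q₂ h₁ h₂ => simp only [mul_add, map_add, h₁, h₂, ← sum_add_distrib]
    | monomial j b =>
      simp only [monomial_mul_monomial, momentAbout_monomial, Nat.cast_add]
      rw [show (i : ℝ) + j - (c + d) = (i - c) + (j - d) by ring, add_pow, mul_sum]
      refine sum_congr rfl fun l _ => by ring

structure HasMomentsUpToFour (p : ℝ[X]) (c s₂ s₄ : ℝ) : Prop where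
  moment_zero : momentAbout c 0 p = 1
  moment_one : momentAbout c 1 p = 0
  moment_two : momentAbout c 2 p = s₂
  moment_three : momentAbout c 3 p = 0
  moment_four : momentAbout c 4 p = s₄

namespace HasMomentsUpToFour

theorem mul {p q : ℝ[X]} {c d s₂ s₄ t₂ t₄ : ℝ}
    (hp : HasMomentsUpToFour p c s₂ s₄) (hq : HasMomentsUpToFour q d t₂ t₄) :
    HasMomentsUpToFour (p * q) (c + d) (s₂ + t₂) (s₄ + 6 * s₂ * t₂ + t₄) := by
  obtain ⟨hp₀, hp₁, hp₂, hp₃, hp₄⟩ := hp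
  obtain ⟨hq₀, hq₁, hq₂, hq₃, hq₄⟩ := hq
  constructor <;> simp only [momentAbout_mul, sum_range_succ, sum_range_zero] <;>
    norm_num [Nat.choose, hp₀, hp₁, hp₂, hp₃, hp₄, hq₀, hq₁, hq₂, hq₃, hq₄] <;> ring

theorem one : HasMomentsUpToFour 1 0 0 0 := by
  constructor <;> rw [← monomial_zero_one, momentAbout_monomial] <;> norm_num

/-- The fourth cumulant `s₄ - 3 s₂²` is additive. -/
theorem prod {ι : Type*} (s : Finset ι) {p : ι → ℝ[X]} {c s₂ s₄ : ι → ℝ}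
    (h : ∀ i ∈ s, HasMomentsUpToFour (p i) (c i) (s₂ i) (s₄ i)) :
    HasMomentsUpToFour (∏ i ∈ s, p i) (∑ i ∈ s, c i) (∑ i ∈ s, s₂ i)
      (∑ i ∈ s, s₄ i + 3 * (∑ i ∈ s, s₂ i) ^ 2 - 3 * ∑ i ∈ s, s₂ i ^ 2) := by
  classical
  induction s using Finset.induction_on with
  | empty => simpa using one
  | insert i s hi ih =>
    simp only [prod_insert hi, sum_insert hi]
    convert (h i (mem_insert_self i s)).mul (ih fun j hj => h j (mem_insert_of_mem hj)) using 1
    ring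

end HasMomentsUpToFour

theorem hasMomentsUpToFour_pgf_factor (v : ℝ) :
    HasMomentsUpToFour (C (v / 2) * (X - 1) ^ 2 + X) 1 v v := by
  have hsplit : C (v / 2) * (X - 1) ^ 2 + X =
      monomial 2 (v / 2) + monomial 1 (1 - v) + monomial 0 (v / 2) := by
    have hv : C (1 - v) = 1 - 2 * C (v / 2) := by
      rw [show 1 - v = 1 - 2 * (v / 2) by ring, C_sub, C_mul, C_1, C_ofNat]
    simp only [← C_mul_X_pow_eq_monomial, hv]
    ring
  constructor <;> simp only [hsplit, map_add, momentAbout_monomial] <;> ring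

/-- `(1 - 2 z c + z²) / (2 (1 - c)) = z + (z - 1)² / (2 (1 - c))`. -/
theorem sum_C_mul_X_pow_eq_prod_of_pgf {ι : Type*} [Fintype ι] (c : ι → ℝ) (hc : ∀ j, c j ≠ 1)
    (s : Finset ℕ) (w : ℕ → ℝ)
    (hpgf : ∀ z : ℝ, ∑ k ∈ s, w k * z ^ k = ∏ j, (1 - 2 * z * c j + z ^ 2) / (2 * (1 - c j))) :
    ∑ k ∈ s, C (w k) * X ^ k = ∏ j, (C (1 / (1 - c j) / 2) * (X - 1) ^ 2 + X) := by
  refine Polynomial.funext fun z => ?_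
  simp only [eval_finsetSum, eval_prod, eval_add, eval_mul, eval_pow, eval_C, eval_X, eval_sub,
    eval_one, hpgf]
  refine prod_congr rfl fun j _ => ?_
  have : 1 - c j ≠ 0 := sub_ne_zero.2 (hc j).symm
  field_simp
  ring

end Polynomial

theorem sq_sum_mul_sq_le_sum_mul_pow_four {ι : Type*} (t : Finset ι) (w x : ι → ℝ)
    (hw : ∀ i ∈ t, 0 ≤ w i) (hw₁ : ∑ i ∈ t, w i = 1) :
    (∑ i ∈ t, w i * x i ^ 2) ^ 2 ≤ ∑ i ∈ t, w i * x i ^ 4 := by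
  have := (convexOn_pow 2).map_sum_le hw hw₁ (p := fun i => x i ^ 2) fun i _ => sq_nonneg (x i)
  simpa only [smul_eq_mul, ← pow_mul] using this

theorem Real.cos_lt_one_of_mem_Ioo {x : ℝ} (hx : x ∈ Set.Ioo 0 (2 * Real.pi)) :
    Real.cos x < 1 :=
  (Real.cos_le_one x).lt_of_ne fun h => hx.1.ne'
    ((Real.cos_eq_one_iff_of_lt_of_lt (by linarith [Real.pi_pos, hx.1]) hx.2).1 h)

theorem stmt7_general (n : ℕ) (hn : 0 < n)
    (φ : Fin n → ℝ) (hφ : ∀ j, φ j ∈ Set.Ioo 0 (2 * Real.pi))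
    (w : ℕ → ℝ) (hw : ∀ k, 0 ≤ w k)
    (hpgf : ∀ z : ℝ,
      ∑ k ∈ Finset.range (2 * n + 1), w k * z ^ k =
        ∏ j : Fin n, (1 - 2 * z * Real.cos (φ j) + z ^ 2) / (2 * (1 - Real.cos (φ j)))) :
    1 ≤ (∑ k ∈ Finset.range (2 * n + 1),
          w k * (((k : ℝ) - n) / Real.sqrt (∑ j : Fin n, 1 / (1 - Real.cos (φ j)))) ^ 4) ∧
      (∑ k ∈ Finset.range (2 * n + 1),
          w k * (((k : ℝ) - n) / Real.sqrt (∑ j : Fin n, 1 / (1 - Real.cos (φ j)))) ^ 4) ≤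
        3 - 1 / (2 * (∑ j : Fin n, 1 / (1 - Real.cos (φ j)))) ∧
      3 - 1 / (2 * (∑ j : Fin n, 1 / (1 - Real.cos (φ j)))) < 3 := by
  have hcos j : Real.cos (φ j) < 1 := Real.cos_lt_one_of_mem_Ioo (hφ j)
  set v : Fin n → ℝ := fun j => 1 / (1 - Real.cos (φ j))
  set S := ∑ j, v j
  have hv j : 1 / 2 ≤ v j := by
    rw [div_le_div_iff₀ two_pos (sub_pos.2 (hcos j))]
    linarith [Real.neg_one_le_cos (φ j)]
  have hS : 0 < S := sum_pos (fun j _ => by linarith [hv j]) (univ_nonempty_iff.2 ⟨⟨0, hn⟩⟩)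
  have hQ : S / 2 ≤ ∑ j, v j ^ 2 := by
    rw [sum_div]
    exact sum_le_sum fun j _ => by nlinarith [hv j]
  obtain ⟨h₀, -, h₂, -, h₄⟩ :=
    HasMomentsUpToFour.prod univ fun j _ => hasMomentsUpToFour_pgf_factor (v j)
  rw [← sum_C_mul_X_pow_eq_prod_of_pgf _ (fun j => (hcos j).ne) _ _ hpgf] at h₀ h₂ h₄
  simp only [momentAbout_sum_C_mul_X_pow, sum_const, card_univ, Fintype.card_fin, nsmul_eq_mul,
    mul_one, pow_zero] at h₀ h₂ h₄
  have hJ := sq_sum_mul_sq_le_sum_mul_pow_four _ w (fun k => (k : ℝ) - n) (fun k _ => hw k) h₀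
  simp only [h₂, h₄] at hJ
  have hS₄ : Real.sqrt S ^ 4 = S ^ 2 := by
    rw [show 4 = 2 * 2 from rfl, pow_mul, Real.sq_sqrt hS.le]
  have hnorm : ∑ k ∈ range (2 * n + 1), w k * (((k : ℝ) - n) / Real.sqrt S) ^ 4 =
      (S + 3 * S ^ 2 - 3 * ∑ j, v j ^ 2) / S ^ 2 := by
    rw [← h₄, sum_div]
    refine sum_congr rfl fun k _ => ?_
    rw [div_pow, hS₄, mul_div_assoc]
  rw [hnorm]
  refine ⟨(one_le_div (by positivity)).2 hJ, ?_, sub_lt_self _ (by positivity)⟩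
  rw [div_le_iff₀ (by positivity), sub_mul, show 1 / (2 * S) * S ^ 2 = S / 2 by field_simp]
  linarith

theorem stmt7 (n : ℕ) (hn : 0 < n)
    (φ : Fin n → ℝ) (hφ : ∀ j, φ j ∈ Set.Ioo 0 (2 * Real.pi))
    (w : ℕ → ℝ) (hw : ∀ k, 0 ≤ w k)
    (hsupp : ∀ k, 2 * n < k → w k = 0)
    (hpgf : ∀ z : ℝ,
      ∑ k ∈ Finset.range (2 * n + 1), w k * z ^ k =
        ∏ j : Fin n, (1 - 2 * z * Real.cos (φ j) + z ^ 2) / (2 * (1 - Real.cos (φ j)))) :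
    1 ≤ (∑ k ∈ Finset.range (2 * n + 1),
          w k * (((k : ℝ) - n) / Real.sqrt (∑ j : Fin n, 1 / (1 - Real.cos (φ j)))) ^ 4) ∧
      (∑ k ∈ Finset.range (2 * n + 1),
          w k * (((k : ℝ) - n) / Real.sqrt (∑ j : Fin n, 1 / (1 - Real.cos (φ j)))) ^ 4) ≤
        3 - 1 / (2 * (∑ j : Fin n, 1 / (1 - Real.cos (φ j)))) ∧
      3 - 1 / (2 * (∑ j : Fin n, 1 / (1 - Real.cos (φ j)))) < 3 :=
  stmt7_general n hn φ hφ w hw hpgf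
end

section
/- For nonnegative integers n, k, j with k ≤ j, the combinatorial identity ∑_{m=0}^{n-k} C(m+k, k) C(n-m, k) C(m, j) = C(k+j, k) C(n+k+1, 2k+j+1) holds. -/
/-!
By `Nat.choose_mul`, `C(m+k,k) C(m,j) = C(k+j,k) C(m+k,k+j)`, so after pulling out `C(k+j,k)`
and substituting `i = m + k`, `l = n - m` the sum becomes the upper-index Vandermonde convolution
`∑_{i+l=s} C(i,a) C(l,b) = C(s+1,a+b+1)` with `s = n + k`, `a = k + j`, `b = k`. The convolution
follows by induction on `s` from Pascal's rule in the first factor.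
-/

open Finset

namespace Nat

theorem sum_antidiagonal_choose_mul_choose_comm (s a b : ℕ) :
    ∑ p ∈ antidiagonal s, p.1.choose a * p.2.choose b =
      ∑ p ∈ antidiagonal s, p.1.choose b * p.2.choose a := by
  rw [← Finset.Nat.sum_antidiagonal_swap]
  simp only [Prod.fst_swap, Prod.snd_swap, mul_comm]

theorem sum_antidiagonal_choose_mul_choose (s a b : ℕ) :
    ∑ p ∈ antidiagonal s, p.1.choose a * p.2.choose b = (s + 1).choose (a + b + 1) := by
  induction s generalizing a b with
  | zero =>
    rcases a with _ | a <;> rcases b with _ | b <;> simp <;>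
      exact (Nat.choose_eq_zero_of_lt (by omega)).symm
  | succ s ih =>
    have step (a b : ℕ) : ∑ p ∈ antidiagonal (s + 1), p.1.choose (a + 1) * p.2.choose b =
        (s + 1 + 1).choose (a + b + 1 + 1) := by
      have pascal (p : ℕ × ℕ) : (p.1 + 1).choose (a + 1) * p.2.choose b =
          p.1.choose a * p.2.choose b + p.1.choose (a + 1) * p.2.choose b := by
        rw [Nat.choose_succ_succ', add_mul]
      rw [Finset.Nat.sum_antidiagonal_succ, Nat.choose_zero_succ, zero_mul, zero_add,
        sum_congr rfl fun p _ => pascal p, sum_add_distrib, ih, ih,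
        Nat.choose_succ_succ' (s + 1) (a + b + 1)]
      ring_nf
    rcases a with _ | a
    · rcases b with _ | b
      · simp [Finset.Nat.card_antidiagonal]
      · rw [sum_antidiagonal_choose_mul_choose_comm, step]
        ring_nf
    · rw [step]
      ring_nf

end Nat

theorem stmt15_general (n k j : ℕ) :
    ∑ m ∈ Finset.range (n - k + 1),
        (m + k).choose k * (n - m).choose k * m.choose j =
      (k + j).choose k * (n + k + 1).choose (2 * k + j + 1) := by
  have factor (m : ℕ) : (m + k).choose k * (n - m).choose k * m.choose j =
      (k + j).choose k * ((m + k).choose (k + j) * (n - m).choose k) := by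
    have h := Nat.choose_mul (n := m + k) (Nat.le_add_right k j)
    rw [Nat.add_sub_cancel, Nat.add_sub_cancel_left] at h
    rw [mul_right_comm, ← h]
    ring
  have reindex : ∑ m ∈ range (n - k + 1), (m + k).choose (k + j) * (n - m).choose k =
      ∑ p ∈ antidiagonal (n + k), p.1.choose (k + j) * p.2.choose k := by
    refine sum_bij_ne_zero (fun m _ _ => (m + k, n - m)) ?_ ?_ ?_ fun _ _ _ => rfl
    · intro m hm _
      rw [mem_range] at hm
      rw [HasAntidiagonal.mem_antidiagonal]
      omega
    · intro _ _ _ _ _ _ h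
      simpa using congrArg Prod.fst h
    · rintro ⟨i, l⟩ hp hne
      simp only [HasAntidiagonal.mem_antidiagonal, mul_ne_zero_iff,
        Nat.choose_ne_zero_iff] at hp hne
      refine ⟨i - k, mem_range.2 (by omega), ?_, Prod.ext (by omega) (by omega)⟩
      simp only [mul_ne_zero_iff, Nat.choose_ne_zero_iff]
      omega
  rw [sum_congr rfl fun m _ => factor m, ← mul_sum, reindex,
    Nat.sum_antidiagonal_choose_mul_choose]
  ring_nf

theorem stmt15 (n k j : ℕ) (hkj : k ≤ j) :
    ∑ m ∈ Finset.range (n - k + 1),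
        (m + k).choose k * (n - m).choose k * m.choose j =
      (k + j).choose k * (n + k + 1).choose (2 * k + j + 1) :=
  stmt15_general n k j
end

section
/- Let Z_{n,k} be the random variable with P(Z_{n,k} = j) = C(j+k,k) C(n-j,k) / C(n+k+1, 2k+1) for 0 ≤ j ≤ n-k. Then E(Z_{n,k}) = (n-k)/2 and Var(Z_{n,k}) = (n-k)(n+k+2)/(4(2k+3)). -/
/-!
The weights `w_j = C(j+k,k) C(n-j,k)` are the terms of the Cauchy product giving the coefficient
of `X^(n-k)` in `(1 - X)^-(k+1) (1 - X)^-(k+1) = (1 - X)^-(2k+2)`, so they sum to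
`C(n+k+1, 2k+1)`; they are symmetric under `j ↦ n - k - j`, which gives the mean `(n-k)/2`.
For the variance, `(j+k+1)(n-j+1) w_j` is `(k+1)^2` times the weight with `k` replaced by `k+1`,
whose total is `C(n+k+3, 2k+3)`; since `(j+k+1)(n-j+1) = ((n+k+2)/2)^2 - (j - (n-k)/2)^2`, the
second central moment is `((n+k+2)/2)^2` minus a ratio of two binomial coefficients.
-/

open Finset PowerSeries

theorem sum_antidiagonal_add_choose_mul_add_choose (a b m : ℕ) :
    ∑ p ∈ antidiagonal m, (a + p.1).choose a * (b + p.2).choose b =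
      (a + b + 1 + m).choose (a + b + 1) := by
  have h := congrArg (coeff m) (pow_add (mk 1 : ℤ⟦X⟧) (a + 1) (b + 1))
  rw [show a + 1 + (b + 1) = a + b + 1 + 1 by ring, mk_one_pow_eq_mk_choose_add,
    mk_one_pow_eq_mk_choose_add, mk_one_pow_eq_mk_choose_add, coeff_mul] at h
  simp only [coeff_mk] at h
  exact_mod_cast h.symm

theorem sum_range_add_choose_mul_add_choose (a b m : ℕ) :
    ∑ j ∈ range (m + 1), (j + a).choose a * (m - j + b).choose b =
      (m + a + b + 1).choose (a + b + 1) := by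
  have h := sum_antidiagonal_add_choose_mul_add_choose a b m
  rw [Nat.sum_antidiagonal_eq_sum_range_succ (fun i j ↦ (a + i).choose a * (b + j).choose b)] at h
  simpa only [Nat.succ_eq_add_one, add_comm, add_left_comm, add_assoc] using h

theorem Nat.add_one_mul_add_two_mul_choose_eq (n k : ℕ) :
    (n + 1) * (n + 2) * n.choose k = (n + 2).choose (k + 2) * ((k + 1) * (k + 2)) := by
  have h₁ := Nat.add_one_mul_choose_eq n k
  have h₂ := Nat.add_one_mul_choose_eq (n + 1) (k + 1)
  calc (n + 1) * (n + 2) * n.choose k = (n + 2) * ((n + 1) * n.choose k) := by ring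
    _ = (n + 1 + 1) * (n + 1).choose (k + 1) * (k + 1) := by rw [h₁]; ring
    _ = _ := by rw [h₂]; ring

namespace TuranFejer

/-- The weight of `j` in the law of `Z_{n,k}`, written with `m = n - k` so that the support is
`0, …, m`. -/
def weight (m k j : ℕ) : ℕ := (j + k).choose k * (m + k - j).choose k

variable (m k : ℕ)

theorem sum_weight : ∑ j ∈ range (m + 1), weight m k j = (m + 2 * k + 1).choose (2 * k + 1) := by
  rw [two_mul, ← add_assoc, ← sum_range_add_choose_mul_add_choose]
  refine sum_congr rfl fun j hj ↦ ?_
  rw [weight, Nat.sub_add_comm (Nat.lt_succ_iff.mp (mem_range.mp hj))]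

theorem weight_sub {j : ℕ} (hj : j ≤ m) : weight m k (m - j) = weight m k j := by
  rw [weight, weight, mul_comm, Nat.sub_add_comm hj, show m + k - (m - j) = j + k by omega]

theorem two_mul_sum_mul_weight :
    2 * ∑ j ∈ range (m + 1), j * weight m k j = m * ∑ j ∈ range (m + 1), weight m k j := by
  have hreflect : ∑ j ∈ range (m + 1), (m - j) * weight m k j =
      ∑ j ∈ range (m + 1), j * weight m k j := by
    rw [← sum_range_reflect]
    refine sum_congr rfl fun j hj ↦ ?_
    have hjm := Nat.lt_succ_iff.mp (mem_range.mp hj)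
    rw [add_tsub_cancel_right, weight_sub m k hjm, Nat.sub_sub_self hjm]
  calc 2 * ∑ j ∈ range (m + 1), j * weight m k j
      = ∑ j ∈ range (m + 1), (j + (m - j)) * weight m k j := by
        rw [two_mul]; nth_rw 2 [← hreflect]; simp only [← sum_add_distrib, add_mul]
    _ = m * ∑ j ∈ range (m + 1), weight m k j := by
        rw [mul_sum]
        exact sum_congr rfl fun j hj ↦ by
          rw [Nat.add_sub_cancel' (Nat.lt_succ_iff.mp (mem_range.mp hj))]

theorem add_mul_add_mul_weight {j : ℕ} (hj : j ≤ m) :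
    (j + k + 1) * (m + k + 1 - j) * weight m k j = (k + 1) ^ 2 * weight m (k + 1) j := by
  have h₁ := Nat.add_one_mul_choose_eq (j + k) k
  have h₂ := Nat.add_one_mul_choose_eq (m + k - j) k
  rw [weight, weight, show m + k + 1 - j = m + k - j + 1 by omega,
    show m + (k + 1) - j = m + k - j + 1 by omega, ← add_assoc j k 1]
  calc _ = (j + k + 1) * (j + k).choose k * ((m + k - j + 1) * (m + k - j).choose k) := by ring
    _ = _ := by rw [h₁, h₂]; ring

theorem sum_mul_weight_div :
    ∑ j ∈ range (m + 1), (j : ℝ) * weight m k j / ((m + 2 * k + 1).choose (2 * k + 1) : ℕ) =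
      (m : ℝ) / 2 := by
  have hpos : (0 : ℝ) < (m + 2 * k + 1).choose (2 * k + 1) := by
    exact_mod_cast Nat.choose_pos (by omega)
  have h := congrArg (Nat.cast : ℕ → ℝ) (two_mul_sum_mul_weight m k)
  have hW := congrArg (Nat.cast : ℕ → ℝ) (sum_weight m k)
  push_cast at h hW
  rw [← sum_div, div_eq_iff hpos.ne', ← hW]
  linarith

theorem sum_sub_sq_mul_weight_div :
    ∑ j ∈ range (m + 1), ((j : ℝ) - (m : ℝ) / 2) ^ 2 * weight m k j /
        ((m + 2 * k + 1).choose (2 * k + 1) : ℕ) =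
      (m : ℝ) * (m + 2 * k + 2) / (4 * (2 * k + 3)) := by
  have hratio := congrArg (Nat.cast : ℕ → ℝ)
    (Nat.add_one_mul_add_two_mul_choose_eq (m + 2 * k + 1) (2 * k + 1))
  rw [show m + 2 * k + 1 + 2 = m + 2 * k + 3 by ring, show 2 * k + 1 + 2 = 2 * k + 3 by ring]
    at hratio
  push_cast at hratio
  set W : ℝ := (((m + 2 * k + 1).choose (2 * k + 1) : ℕ) : ℝ)
  set W' : ℝ := (((m + 2 * k + 3).choose (2 * k + 3) : ℕ) : ℝ)
  have hpos : 0 < W := Nat.cast_pos.mpr (Nat.choose_pos (by omega))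
  -- `(j + k + 1) (m + k + 1 - j) = (m / 2 + k + 1) ^ 2 - (j - m / 2) ^ 2`
  have hsplit : ∀ j ∈ range (m + 1), ((j : ℝ) - m / 2) ^ 2 * weight m k j =
      (m / 2 + k + 1) ^ 2 * weight m k j - (k + 1) ^ 2 * weight m (k + 1) j := by
    intro j hj
    have hjm := Nat.lt_succ_iff.mp (mem_range.mp hj)
    have h := congrArg (Nat.cast : ℕ → ℝ) (add_mul_add_mul_weight m k hjm)
    push_cast [Nat.cast_sub (show j ≤ m + k + 1 by omega)] at h
    linear_combination -h
  have hsum : ∑ j ∈ range (m + 1), ((j : ℝ) - m / 2) ^ 2 * weight m k j =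
      (m / 2 + k + 1) ^ 2 * W - (k + 1) ^ 2 * W' := by
    have h₁ := congrArg (Nat.cast : ℕ → ℝ) (sum_weight m k)
    have h₂ := congrArg (Nat.cast : ℕ → ℝ) (sum_weight m (k + 1))
    rw [show m + 2 * (k + 1) + 1 = m + 2 * k + 3 by ring,
      show 2 * (k + 1) + 1 = 2 * k + 3 by ring] at h₂
    push_cast at h₁ h₂
    rw [sum_congr rfl hsplit, sum_sub_distrib, ← mul_sum, ← mul_sum, h₁, h₂]
  rw [← sum_div, hsum, div_eq_div_iff hpos.ne' (by positivity)]
  linear_combination (2 * (k : ℝ) + 2) * hratio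

end TuranFejer

theorem stmt16 (n k : ℕ) (hkn : k ≤ n) :
    (∑ j ∈ Finset.range (n - k + 1),
        (j : ℝ) * ((j + k).choose k * (n - j).choose k : ℕ)
          / ((n + k + 1).choose (2 * k + 1) : ℕ)) = ((n : ℝ) - k) / 2 ∧
    (∑ j ∈ Finset.range (n - k + 1),
        ((j : ℝ) - ((n : ℝ) - k) / 2) ^ 2 *
          ((j + k).choose k * (n - j).choose k : ℕ)
          / ((n + k + 1).choose (2 * k + 1) : ℕ)) =
      ((n : ℝ) - k) * ((n : ℝ) + k + 2) / (4 * (2 * (k : ℝ) + 3)) := by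
  obtain ⟨m, rfl⟩ := Nat.exists_eq_add_of_le' hkn
  have hm : ((m + k : ℕ) : ℝ) - k = m := by push_cast; ring
  rw [Nat.add_sub_cancel, show m + k + k + 1 = m + 2 * k + 1 by ring, hm,
    show ((m + k : ℕ) : ℝ) + k + 2 = m + 2 * k + 2 by push_cast; ring]
  exact ⟨TuranFejer.sum_mul_weight_div m k, TuranFejer.sum_sub_sq_mul_weight_div m k⟩
end

section
/- The Reimer polynomial R_n(y) = ∑_{j=0}^n C(n,j) y^j ∫_j^{j+1} |t(t-1)⋯(t-n-1)| dt satisfies R_n(1) = (n+2)!/12 for every n ≥ 1. -/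
/-!
On `[j, j + 1]` the product `P t = t (t - 1) ⋯ (t - n - 1)` has the constant sign
`(-1) ^ (n + 1 - j)`, so after shifting every integral to `[0, 1]` the binomial sum becomes
`-∫₀¹ Δⁿ P`, where `Δ` is the forward difference with step `1`. Since `Δ` acts on falling
factorials like a derivative, `Δⁿ P u = (n + 2)! / 2 · u (u - 1)`, and `∫₀¹ u (u - 1) = -1/6`.
-/

open Finset intervalIntegral
open scoped fwdDiff Nat

section CommRing

variable {R : Type*} [CommRing R]

lemma fwdDiff_prod_range_sub (k : ℕ) :
    Δ_[1] (fun t : R => ∏ i ∈ range (k + 1), (t - i)) =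
      fun t : R => ((k : R) + 1) * ∏ i ∈ range k, (t - i) := by
  funext t
  rw [fwdDiff, prod_range_succ', prod_range_succ]
  simp only [Nat.cast_add, Nat.cast_one, Nat.cast_zero, add_sub_add_right_eq_sub, sub_zero]
  ring

lemma fwdDiff_iter_prod_range_sub (m k : ℕ) :
    (Δ_[1])^[m] (fun t : R => ∏ i ∈ range (k + m), (t - i)) =
      fun t : R => ((k + m).descFactorial m : R) * ∏ i ∈ range k, (t - i) := by
  induction m with
  | zero => simp
  | succ m ih =>
    rw [← add_assoc, Function.iterate_succ_apply, fwdDiff_prod_range_sub]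
    have hsmul : (fun t : R => ((k + m : ℕ) + 1 : R) * ∏ i ∈ range (k + m), (t - i)) =
        ((k + m : ℕ) + 1 : R) • fun t : R => ∏ i ∈ range (k + m), (t - i) := rfl
    rw [hsmul, fwdDiff_iter_const_smul, ih]
    funext t
    simp only [Pi.smul_apply, smul_eq_mul, Nat.succ_descFactorial_succ, Nat.cast_mul]
    push_cast
    ring

lemma sum_choose_mul_neg_one_pow_shift (f : R → R) (n : ℕ) (u : R) :
    ∑ j ∈ range (n + 1), (n.choose j : R) * (-1) ^ (n + 1 - j) * f (u + j) =
      -(Δ_[1])^[n] f u := by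
  rw [fwdDiff_iter_eq_sum_shift, ← sum_neg_distrib]
  refine sum_congr rfl fun j hj => ?_
  rw [Nat.sub_add_comm (Nat.lt_succ_iff.mp (mem_range.mp hj)), zsmul_eq_mul, nsmul_eq_mul, mul_one]
  push_cast
  ring

end CommRing

section OrderedRing

variable {R : Type*} [CommRing R] [LinearOrder R] [IsStrictOrderedRing R]

lemma abs_prod_range_sub_of_mem_Icc {N j : ℕ} (hj : j < N) {t : R}
    (ht : t ∈ Set.Icc (j : R) (j + 1)) :
    |∏ i ∈ range N, (t - i)| = (-1) ^ (N - 1 - j) * ∏ i ∈ range N, (t - i) := by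
  have hflip : (-1) ^ (N - 1 - j) * ∏ i ∈ Ico (j + 1) N, (t - i) =
      ∏ i ∈ Ico (j + 1) N, ((i : R) - t) := by
    rw [show N - 1 - j = #(Ico (j + 1) N) by simp; omega, ← prod_neg]
    exact prod_congr rfl fun i _ => neg_sub t i
  have hnonneg : 0 ≤ (-1) ^ (N - 1 - j) * ∏ i ∈ range N, (t - i) := by
    rw [← prod_range_mul_prod_Ico _ (show j + 1 ≤ N by omega), mul_left_comm, hflip]
    refine mul_nonneg (prod_nonneg fun i hi => ?_) (prod_nonneg fun i hi => ?_)
    · have : (i : R) ≤ j := by exact_mod_cast Nat.lt_succ_iff.mp (mem_range.mp hi)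
      linarith [ht.1]
    · have : (j : R) + 1 ≤ i := by exact_mod_cast (mem_Ico.mp hi).1
      linarith [ht.2]
  rw [← abs_of_nonneg hnonneg, abs_mul, abs_neg_one_pow, one_mul]

end OrderedRing

lemma integral_abs_prod_range_sub {N j : ℕ} (hj : j < N) :
    ∫ t in (j : ℝ)..(j + 1), |∏ i ∈ range N, (t - i)| =
      (-1) ^ (N - 1 - j) * ∫ u in (0 : ℝ)..1, ∏ i ∈ range N, (u + j - i) := by
  rw [← integral_const_mul,
    integral_comp_add_right (fun t => (-1) ^ (N - 1 - j) * ∏ i ∈ range N, (t - i)),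
    zero_add, add_comm 1]
  refine integral_congr fun t ht => ?_
  rw [Set.uIcc_of_le (by linarith)] at ht
  exact abs_prod_range_sub_of_mem_Icc hj ht

lemma fwdDiff_iter_prod_range_sub_two {K : Type*} [Field K] [CharZero K] (n : ℕ) (u : K) :
    (Δ_[1])^[n] (fun t : K => ∏ i ∈ range (n + 2), (t - i)) u =
      (n + 2)! / 2 * (u * (u - 1)) := by
  rw [add_comm n, fwdDiff_iter_prod_range_sub,
    ← Nat.factorial_mul_descFactorial (show n ≤ 2 + n by omega)]
  simp [prod_range_succ]

lemma integral_mul_sub_one : ∫ u in (0 : ℝ)..1, u * (u - 1) = -1 / 6 := by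
  have : (fun u : ℝ => u * (u - 1)) = fun u => u ^ 2 - u := by ext; ring
  simp [this, integral_sub, integral_pow]
  norm_num

theorem stmt18_general (n : ℕ) :
    (∑ j ∈ Finset.range (n + 1),
        (n.choose j : ℝ) *
          ∫ t in (j : ℝ)..((j : ℝ) + 1), |∏ i ∈ Finset.range (n + 2), (t - i)|) =
      ((n + 2).factorial : ℝ) / 12 := by
  set P : ℝ → ℝ := fun t => ∏ i ∈ range (n + 2), (t - i) with hP
  calc _ = ∑ j ∈ range (n + 1),
        ∫ u in (0 : ℝ)..1, (n.choose j : ℝ) * (-1) ^ (n + 1 - j) * P (u + j) := by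
        refine sum_congr rfl fun j hj => ?_
        rw [integral_abs_prod_range_sub (Nat.lt_succ_of_lt (mem_range.mp hj)), integral_const_mul,
          show n + 2 - 1 - j = n + 1 - j by omega, mul_assoc]
    _ = ∫ u in (0 : ℝ)..1, -((n + 2)! / 2 * (u * (u - 1))) := by
        rw [← integral_finsetSum fun j _ => by apply Continuous.intervalIntegrable; fun_prop]
        refine integral_congr fun u _ => ?_
        rw [sum_choose_mul_neg_one_pow_shift, hP, fwdDiff_iter_prod_range_sub_two]
    _ = (n + 2)! / 12 := by
        rw [integral_neg, integral_const_mul, integral_mul_sub_one]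
        ring

theorem stmt18 (n : ℕ) (hn : 1 ≤ n) :
    (∑ j ∈ Finset.range (n + 1),
        (n.choose j : ℝ) *
          ∫ t in (j : ℝ)..((j : ℝ) + 1), |∏ i ∈ Finset.range (n + 2), (t - i)|) =
      ((n + 2).factorial : ℝ) / 12 :=
  stmt18_general n
end
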